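/- arXiv:2311.02574 — 4 statements merged into one kernel-verified Lean document; each statement's English description precedes it below -/
import Mathlib

section
/- Let (Ω, ℱ, P) be a probability space, let T, L, U : Ω → ℝ be random variables such that L < U almost surely and T is independent of the pair (L, U), and let X = max(L, min(T, U)). Then for every t ∈ ℝ, P(X ≥ t > L) = P(U ≥ t > L) · P(T ≥ t). In particular, if P(U ≥ t > L) > 0, then the survival function S(t) = P(T ≥ t) satisfies S(t) = P(X ≥ t > L) / P(U ≥ t > L). -/
open MeasureTheory ProbabilityTheory

/-- Under double censoring with `T` independent of `(L, U)` and `L < U` a.s.,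
`P(X ≥ t > L) = P(U ≥ t > L) · P(T ≥ t)`; in particular, if `P(U ≥ t > L) > 0` then
`S(t) = P(T ≥ t) = P(X ≥ t > L) / P(U ≥ t > L)`. -/
theorem stmt_1 {Ω : Type*} [MeasurableSpace Ω] (P : Measure Ω) [IsProbabilityMeasure P]
    (T L U : Ω → ℝ) (hT : Measurable T) (hL : Measurable L) (hU : Measurable U)
    (hLU : ∀ᵐ ω ∂P, L ω < U ω)
    (hindep : IndepFun T (fun ω => (L ω, U ω)) P)
    (X : Ω → ℝ) (hX : ∀ ω, X ω = max (L ω) (min (T ω) (U ω))) (t : ℝ) :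
    P {ω | X ω ≥ t ∧ t > L ω} = P {ω | U ω ≥ t ∧ t > L ω} * P {ω | T ω ≥ t} ∧
    (0 < P {ω | U ω ≥ t ∧ t > L ω} →
      P {ω | T ω ≥ t} = P {ω | X ω ≥ t ∧ t > L ω} / P {ω | U ω ≥ t ∧ t > L ω}) := by
  have hset : {ω | X ω ≥ t ∧ t > L ω}
      = T ⁻¹' Set.Ici t ∩ (fun ω => (L ω, U ω)) ⁻¹' {p : ℝ × ℝ | p.2 ≥ t ∧ t > p.1} := by
    ext ω
    simp only [Set.mem_setOf_eq, Set.mem_inter_iff, Set.mem_preimage, Set.mem_Ici, hX]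
    constructor
    · rintro ⟨hx, hl⟩
      have hm : min (T ω) (U ω) ≥ t := by
        rcases max_cases (L ω) (min (T ω) (U ω)) with ⟨h1, h2⟩ | ⟨h1, h2⟩
        · linarith [h1 ▸ hx]
        · rw [h1] at hx; exact hx
      exact ⟨le_trans hm (min_le_left _ _), le_trans hm (min_le_right _ _), hl⟩
    · rintro ⟨ht, hu, hl⟩
      exact ⟨le_trans (le_min ht hu) (le_max_right _ _), hl⟩
  have hsetU : {ω | U ω ≥ t ∧ t > L ω}
      = (fun ω => (L ω, U ω)) ⁻¹' {p : ℝ × ℝ | p.2 ≥ t ∧ t > p.1} := rfl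
  have hB : MeasurableSet {p : ℝ × ℝ | p.2 ≥ t ∧ t > p.1} :=
    (measurableSet_le measurable_const measurable_snd).inter
      (measurableSet_lt measurable_fst measurable_const)
  have hmul : P {ω | X ω ≥ t ∧ t > L ω}
      = P {ω | T ω ≥ t} * P {ω | U ω ≥ t ∧ t > L ω} := by
    rw [hset, hsetU]
    exact hindep.measure_inter_preimage_eq_mul _ _ measurableSet_Ici hB
  refine ⟨by rw [hmul, mul_comm], fun hpos => ?_⟩
  rw [hmul, mul_div_assoc, ENNReal.div_self hpos.ne' (measure_ne_top P _), mul_one]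
end

section
/- Let (Ω, ℱ, P) be a probability space, let T, L, U : Ω → ℝ be random variables with L < U almost surely and T independent of the pair (L, U), and let X = max(L, min(T, U)). Fix t ∈ ℝ and set A = 1{U ≥ t > L} and Y = 1{X ≥ t > L}. Let G : Ω → ℝ be an integrable random variable satisfying the calibration moment condition E[A·(Y − G)] = 0, and assume E[A] > 0. Then E[A·G] / E[A] = P(T ≥ t). That is, the population-level marginalized imputed risk equals the true survival rate S(t), regardless of whether G arises from a correctly specified imputation model. -/
open MeasureTheory ProbabilityTheory Set

/-! On the event `A = 1{L < t ≤ U}` the doubly censored observation satisfies `X ≥ t ↔ T ≥ t`,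
so `A·Y = A·1{T ≥ t}`. The calibration condition replaces `E[A·G]` by `E[A·Y]`, and since `T` is
independent of `(L, U)`, `E[A·1{T ≥ t}] = E[A]·P(T ≥ t)`. Dividing by `E[A] > 0` gives `S(t)`,
whatever `G` is. -/

theorem le_max_min_iff {α : Type*} [LinearOrder α] {l x u t : α} (hl : l < t) (hu : t ≤ u) :
    t ≤ max l (min x u) ↔ t ≤ x := by
  simp [hu, not_le.mpr hl]

theorem inter_setOf_max_min_ge_eq_inter_setOf_ge {Ω : Type*} (T L U : Ω → ℝ) (t : ℝ) :
    {ω | U ω ≥ t ∧ t > L ω} ∩ {ω | max (L ω) (min (T ω) (U ω)) ≥ t ∧ t > L ω}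
      = {ω | U ω ≥ t ∧ t > L ω} ∩ {ω | T ω ≥ t} := by
  ext ω
  simp only [mem_inter_iff, mem_ofPred_eq]
  constructor
  · rintro ⟨hw, hX, -⟩
    exact ⟨hw, (le_max_min_iff hw.2 hw.1).1 hX⟩
  · rintro ⟨hw, hT⟩
    exact ⟨hw, (le_max_min_iff hw.2 hw.1).2 hT, hw.2⟩

theorem ProbabilityTheory.IndepFun.measureReal_inter_preimage_eq_mul {Ω β γ : Type*}
    [MeasurableSpace Ω] [MeasurableSpace β] [MeasurableSpace γ] {μ : Measure Ω} [IsFiniteMeasure μ]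
    {f : Ω → β} {g : Ω → γ} (h : IndepFun f g μ) {s : Set β} {t : Set γ}
    (hs : MeasurableSet s) (ht : MeasurableSet t) :
    μ.real (f ⁻¹' s ∩ g ⁻¹' t) = μ.real (f ⁻¹' s) * μ.real (g ⁻¹' t) := by
  simp only [measureReal_def, h.measure_inter_preimage_eq_mul s t hs ht, ENNReal.toReal_mul]

theorem integral_mul_eq_of_integral_mul_sub_eq_zero {Ω : Type*} [MeasurableSpace Ω]
    {μ : Measure Ω} {A Y G : Ω → ℝ} (hY : Integrable (fun ω => A ω * Y ω) μ)
    (hG : Integrable (fun ω => A ω * G ω) μ) (h : ∫ ω, A ω * (Y ω - G ω) ∂μ = 0) :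
    ∫ ω, A ω * G ω ∂μ = ∫ ω, A ω * Y ω ∂μ := by
  simp only [mul_sub] at h
  rw [integral_sub hY hG, sub_eq_zero] at h
  exact h.symm

theorem stmt_2_general {Ω : Type*} [MeasurableSpace Ω] (P : Measure Ω) [IsProbabilityMeasure P]
    (T L U : Ω → ℝ) (hT : Measurable T) (hL : Measurable L) (hU : Measurable U)
    (hindep : IndepFun T (fun ω => (L ω, U ω)) P)
    (X : Ω → ℝ) (hX : ∀ ω, X ω = max (L ω) (min (T ω) (U ω))) (t : ℝ)
    (A Y : Ω → ℝ)
    (hA : ∀ ω, A ω = if U ω ≥ t ∧ t > L ω then 1 else 0)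
    (hY : ∀ ω, Y ω = if X ω ≥ t ∧ t > L ω then 1 else 0)
    (G : Ω → ℝ) (hGint : Integrable G P)
    (hcal : ∫ ω, A ω * (Y ω - G ω) ∂P = 0)
    (hpos : 0 < ∫ ω, A ω ∂P) :
    (∫ ω, A ω * G ω ∂P) / (∫ ω, A ω ∂P) = (P {ω | T ω ≥ t}).toReal := by
  set R := {p : ℝ × ℝ | p.2 ≥ t ∧ t > p.1}
  set W := (fun ω => (L ω, U ω)) ⁻¹' R
  set S := T ⁻¹' Ici t
  have hR : MeasurableSet R :=
    (measurableSet_le measurable_const measurable_snd).inter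
      (measurableSet_lt measurable_fst measurable_const)
  have hWm : MeasurableSet W := (hL.prodMk hU) hR
  have hSm : MeasurableSet S := hT measurableSet_Ici
  have hA' : A = W.indicator 1 := funext fun ω => by simp [hA, W, R, indicator_apply]
  have hAY : (fun ω => A ω * Y ω) = (W ∩ S).indicator 1 := by
    have hY' : Y = {ω | max (L ω) (min (T ω) (U ω)) ≥ t ∧ t > L ω}.indicator 1 :=
      funext fun ω => by simp [hY, hX, indicator_apply]
    rw [hA', hY', ← Pi.mul_def, ← inter_indicator_one]
    exact congrArg (indicator · 1) (inter_setOf_max_min_ge_eq_inter_setOf_ge T L U t)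
  have hAG : (fun ω => A ω * G ω) = W.indicator G := by
    rw [hA']; ext ω; by_cases h : ω ∈ W <;> simp [h]
  have hcal' : ∫ ω, A ω * G ω ∂P = ∫ ω, A ω * Y ω ∂P :=
    integral_mul_eq_of_integral_mul_sub_eq_zero
      (hAY ▸ (integrable_const 1).indicator (hWm.inter hSm)) (hAG ▸ hGint.indicator hWm) hcal
  have hindep' : P.real (W ∩ S) = P.real W * P.real S := by
    rw [inter_comm, mul_comm]
    exact hindep.measureReal_inter_preimage_eq_mul measurableSet_Ici hR
  have hEA : ∫ ω, A ω ∂P = P.real W := by rw [hA', integral_indicator_one hWm]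
  rw [hcal', hAY, integral_indicator_one (hWm.inter hSm), hEA, hindep',
    mul_div_cancel_left₀ _ (hEA ▸ hpos).ne']
  rfl

/-- Under double censoring with `T` independent of `(L, U)` and `L < U` a.s.,
if the imputed risk `G` satisfies the calibration moment condition `E[A·(Y − G)] = 0`
with `A = 1{U ≥ t > L}`, `Y = 1{X ≥ t > L}`, and `E[A] > 0`, then
`E[A·G] / E[A] = P(T ≥ t)`. -/
theorem stmt_2 {Ω : Type*} [MeasurableSpace Ω] (P : Measure Ω) [IsProbabilityMeasure P]
    (T L U : Ω → ℝ) (hT : Measurable T) (hL : Measurable L) (hU : Measurable U)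
    (hLU : ∀ᵐ ω ∂P, L ω < U ω)
    (hindep : IndepFun T (fun ω => (L ω, U ω)) P)
    (X : Ω → ℝ) (hX : ∀ ω, X ω = max (L ω) (min (T ω) (U ω))) (t : ℝ)
    (A Y : Ω → ℝ)
    (hA : ∀ ω, A ω = if U ω ≥ t ∧ t > L ω then 1 else 0)
    (hY : ∀ ω, Y ω = if X ω ≥ t ∧ t > L ω then 1 else 0)
    (G : Ω → ℝ) (hGmeas : Measurable G) (hGint : Integrable G P)
    (hcal : ∫ ω, A ω * (Y ω - G ω) ∂P = 0)
    (hpos : 0 < ∫ ω, A ω ∂P) :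
    (∫ ω, A ω * G ω ∂P) / (∫ ω, A ω ∂P) = (P {ω | T ω ≥ t}).toReal :=
  stmt_2_general P T L U hT hL hU hindep X hX t A Y hA hY G hGint hcal hpos
end

section
/- Let (Tᵢ, Lᵢ, Uᵢ), i = 1, 2, …, be an i.i.d. sequence of random vectors on a probability space such that within each triple T is independent of (L, U) and L < U almost surely, and set Xᵢ = max(Lᵢ, min(Tᵢ, Uᵢ)). Fix t ∈ ℝ with P(U₁ ≥ t > L₁) > 0. Then the supervised estimator Ŝ_SD(t) = (Σᵢ₌₁ⁿ 1{Xᵢ ≥ t > Lᵢ}) / (Σᵢ₌₁ⁿ 1{Uᵢ ≥ t > Lᵢ}) converges almost surely to S(t) = P(T₁ ≥ t) as n → ∞. -/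
open MeasureTheory ProbabilityTheory Filter

/-- For an i.i.d. sequence of triples `(Tᵢ, Lᵢ, Uᵢ)` with `T` independent of
`(L, U)` within each triple, `L < U` a.s., and `Xᵢ = max(Lᵢ, min(Tᵢ, Uᵢ))`, if
`P(U₁ ≥ t > L₁) > 0` then the supervised estimator
`Ŝ_SD(t) = (Σᵢ 1{Xᵢ ≥ t > Lᵢ}) / (Σᵢ 1{Uᵢ ≥ t > Lᵢ})` converges almost surely to
`S(t) = P(T₁ ≥ t)`. -/
theorem stmt_4 {Ω : Type*} [MeasurableSpace Ω] (P : Measure Ω) [IsProbabilityMeasure P]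
    (T L U : ℕ → Ω → ℝ)
    (hmeas : ∀ i, Measurable (fun ω => (T i ω, L i ω, U i ω)))
    (hindep : iIndepFun (fun i ω => (T i ω, L i ω, U i ω)) P)
    (hident : ∀ i, IdentDistrib (fun ω => (T i ω, L i ω, U i ω))
      (fun ω => (T 0 ω, L 0 ω, U 0 ω)) P P)
    (hTLU : ∀ i, IndepFun (T i) (fun ω => (L i ω, U i ω)) P)
    (hLU : ∀ i, ∀ᵐ ω ∂P, L i ω < U i ω)
    (X : ℕ → Ω → ℝ) (hX : ∀ i ω, X i ω = max (L i ω) (min (T i ω) (U i ω)))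
    (t : ℝ) (hpos : 0 < P {ω | U 0 ω ≥ t ∧ t > L 0 ω}) :
    ∀ᵐ ω ∂P, Tendsto (fun n : ℕ =>
        (∑ i ∈ Finset.range n, (if X i ω ≥ t ∧ t > L i ω then (1 : ℝ) else 0)) /
        (∑ i ∈ Finset.range n, (if U i ω ≥ t ∧ t > L i ω then (1 : ℝ) else 0)))
      atTop (nhds (P {ω | T 0 ω ≥ t}).toReal) := by
  classical
  set W : ℕ → Ω → ℝ × ℝ × ℝ := fun i ω => (T i ω, L i ω, U i ω) with hW
  -- the two indicator functions on ℝ³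
  set f : ℝ × ℝ × ℝ → ℝ :=
    fun p => if max p.2.1 (min p.1 p.2.2) ≥ t ∧ t > p.2.1 then 1 else 0 with hf
  set g : ℝ × ℝ × ℝ → ℝ := fun p => if p.2.2 ≥ t ∧ t > p.2.1 then 1 else 0 with hg
  have hSf : MeasurableSet {p : ℝ × ℝ × ℝ | max p.2.1 (min p.1 p.2.2) ≥ t ∧ t > p.2.1} := by
    have h1 : MeasurableSet {p : ℝ × ℝ × ℝ | t ≤ max p.2.1 (min p.1 p.2.2)} :=
      measurableSet_le measurable_const
        ((measurable_snd.fst).max ((measurable_fst).min measurable_snd.snd))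
    have h2 : MeasurableSet {p : ℝ × ℝ × ℝ | p.2.1 < t} :=
      measurableSet_lt measurable_snd.fst measurable_const
    have : {p : ℝ × ℝ × ℝ | max p.2.1 (min p.1 p.2.2) ≥ t ∧ t > p.2.1}
        = {p : ℝ × ℝ × ℝ | t ≤ max p.2.1 (min p.1 p.2.2)} ∩ {p : ℝ × ℝ × ℝ | p.2.1 < t} := by
      ext p; simp [and_comm]
    rw [this]; exact h1.inter h2
  have hSg : MeasurableSet {p : ℝ × ℝ × ℝ | p.2.2 ≥ t ∧ t > p.2.1} := by
    have h1 : MeasurableSet {p : ℝ × ℝ × ℝ | t ≤ p.2.2} :=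
      measurableSet_le measurable_const measurable_snd.snd
    have h2 : MeasurableSet {p : ℝ × ℝ × ℝ | p.2.1 < t} :=
      measurableSet_lt measurable_snd.fst measurable_const
    have : {p : ℝ × ℝ × ℝ | p.2.2 ≥ t ∧ t > p.2.1}
        = {p : ℝ × ℝ × ℝ | t ≤ p.2.2} ∩ {p : ℝ × ℝ × ℝ | p.2.1 < t} := by
      ext p; simp [and_comm]
    rw [this]; exact h1.inter h2
  have hfm : Measurable f := Measurable.ite hSf measurable_const measurable_const
  have hgm : Measurable g := Measurable.ite hSg measurable_const measurable_const
  -- the random variables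
  set Y : ℕ → Ω → ℝ := fun i => f ∘ W i with hY
  set Z : ℕ → Ω → ℝ := fun i => g ∘ W i with hZ
  have hYval : ∀ i ω, Y i ω = if X i ω ≥ t ∧ t > L i ω then (1 : ℝ) else 0 := by
    intro i ω
    simp only [hY, hf, hW, Function.comp_apply, hX i ω]
  have hZval : ∀ i ω, Z i ω = if U i ω ≥ t ∧ t > L i ω then (1 : ℝ) else 0 := fun i ω => rfl
  -- indicator representation for integrals
  have hYind : Y 0 = Set.indicator {ω | X 0 ω ≥ t ∧ t > L 0 ω} (fun _ => (1 : ℝ)) := by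
    funext ω
    rw [hYval, Set.indicator_apply]
    simp only [Set.mem_setOf_eq]
  have hZind : Z 0 = Set.indicator {ω | U 0 ω ≥ t ∧ t > L 0 ω} (fun _ => (1 : ℝ)) := by
    funext ω
    rw [hZval, Set.indicator_apply]
    simp only [Set.mem_setOf_eq]
  have hmA : MeasurableSet {ω | X 0 ω ≥ t ∧ t > L 0 ω} := by
    have : {ω | X 0 ω ≥ t ∧ t > L 0 ω} = W 0 ⁻¹' {p | max p.2.1 (min p.1 p.2.2) ≥ t ∧ t > p.2.1} := by
      ext ω; simp [hW, hX 0 ω]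
    rw [this]; exact (hmeas 0) hSf
  have hmB : MeasurableSet {ω | U 0 ω ≥ t ∧ t > L 0 ω} := by
    have : {ω | U 0 ω ≥ t ∧ t > L 0 ω} = W 0 ⁻¹' {p | p.2.2 ≥ t ∧ t > p.2.1} := by
      ext ω; simp [hW]
    rw [this]; exact (hmeas 0) hSg
  -- integrability
  have hYint : Integrable (Y 0) P := by
    rw [hYind]; exact (integrable_const (1 : ℝ)).indicator hmA
  have hZint : Integrable (Z 0) P := by
    rw [hZind]; exact (integrable_const (1 : ℝ)).indicator hmB
  -- expectations
  have hYexp : (∫ ω, Y 0 ω ∂P) = (P {ω | X 0 ω ≥ t ∧ t > L 0 ω}).toReal := by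
    rw [hYind, integral_indicator_const _ hmA]; simp [Measure.real]
  have hZexp : (∫ ω, Z 0 ω ∂P) = (P {ω | U 0 ω ≥ t ∧ t > L 0 ω}).toReal := by
    rw [hZind, integral_indicator_const _ hmB]; simp [Measure.real]
  -- independence and identical distribution of Y, Z
  have hYindep : Pairwise (Function.onFun (IndepFun · · P) Y) := by
    intro i j hij
    exact (hindep.comp (fun _ => f) (fun _ => hfm)).indepFun hij
  have hZindep : Pairwise (Function.onFun (IndepFun · · P) Z) := by
    intro i j hij
    exact (hindep.comp (fun _ => g) (fun _ => hgm)).indepFun hij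
  have hYident : ∀ i, IdentDistrib (Y i) (Y 0) P P := fun i => (hident i).comp hfm
  have hZident : ∀ i, IdentDistrib (Z i) (Z 0) P P := fun i => (hident i).comp hgm
  -- strong law of large numbers
  have hY_lln := strong_law_ae_real Y hYint hYindep hYident
  have hZ_lln := strong_law_ae_real Z hZint hZindep hZident
  -- Identify the sets
  have hAeq : {ω | X 0 ω ≥ t ∧ t > L 0 ω}
      = (T 0 ⁻¹' Set.Ici t) ∩ ((fun ω => (L 0 ω, U 0 ω)) ⁻¹' {p : ℝ × ℝ | p.2 ≥ t ∧ t > p.1}) := by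
    ext ω
    simp only [Set.mem_setOf_eq, Set.mem_inter_iff, Set.mem_preimage, Set.mem_Ici, hX 0 ω,
      ge_iff_le, le_max_iff, le_min_iff]
    constructor
    · rintro ⟨h1 | ⟨h2, h3⟩, h4⟩
      · linarith
      · exact ⟨h2, h3, h4⟩
    · rintro ⟨h1, h2, h3⟩
      exact ⟨Or.inr ⟨h1, h2⟩, h3⟩
  have hBeq : {ω | U 0 ω ≥ t ∧ t > L 0 ω}
      = (fun ω => (L 0 ω, U 0 ω)) ⁻¹' {p : ℝ × ℝ | p.2 ≥ t ∧ t > p.1} := by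
    ext ω; simp
  have hSpair : MeasurableSet {p : ℝ × ℝ | p.2 ≥ t ∧ t > p.1} :=
    (measurableSet_le measurable_const measurable_snd).inter
      (measurableSet_lt measurable_fst measurable_const)
  have hfactor : P {ω | X 0 ω ≥ t ∧ t > L 0 ω}
      = P {ω | T 0 ω ≥ t} * P {ω | U 0 ω ≥ t ∧ t > L 0 ω} := by
    rw [hAeq, hBeq]
    have := (hTLU 0).measure_inter_preimage_eq_mul (Set.Ici t) {p : ℝ × ℝ | p.2 ≥ t ∧ t > p.1}
      measurableSet_Ici hSpair
    rw [this]
    congr 1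
  -- denominators
  have hBne : P {ω | U 0 ω ≥ t ∧ t > L 0 ω} ≠ ⊤ := measure_ne_top _ _
  have hbpos : 0 < (P {ω | U 0 ω ≥ t ∧ t > L 0 ω}).toReal :=
    ENNReal.toReal_pos hpos.ne' hBne
  -- combine
  filter_upwards [hY_lln, hZ_lln] with ω hYω hZω
  have hdiv : Tendsto (fun n : ℕ =>
      ((∑ i ∈ Finset.range n, Y i ω) / n) / ((∑ i ∈ Finset.range n, Z i ω) / n))
      atTop (nhds ((∫ ω, Y 0 ω ∂P) / (∫ ω, Z 0 ω ∂P))) := by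
    refine hYω.div hZω ?_
    rw [hZexp]; exact hbpos.ne'
  have hlim : (∫ ω, Y 0 ω ∂P) / (∫ ω, Z 0 ω ∂P) = (P {ω | T 0 ω ≥ t}).toReal := by
    rw [hYexp, hZexp, hfactor, ENNReal.toReal_mul,
      mul_div_assoc, div_self hbpos.ne', mul_one]
  rw [← hlim]
  apply hdiv.congr'
  filter_upwards [eventually_ge_atTop 1] with n hn
  have hn' : (n : ℝ) ≠ 0 := by positivity
  have key : ∀ a b : ℝ, (a / (n : ℝ)) / (b / (n : ℝ)) = a / b := by
    intro a b
    rcases eq_or_ne b 0 with hb | hb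
    · simp [hb]
    · field_simp
  rw [key]
  congr 1
  · exact Finset.sum_congr rfl fun i _ => hYval i ω
end

section
/- Let (Tᵢ, Lᵢ), i = 1, 2, …, be i.i.d. copies of a pair (T, L) of real random variables with T independent of L. Assume L has a density f_l with respect to Lebesgue measure, fix t ∈ ℝ such that f_l is continuous at t with f_l(t) > 0 and the survival function S(s) = P(T ≥ s) is continuous at t. Let K : ℝ → ℝ be a bounded nonnegative probability density with compact support, set K_h(u) = K(u/h)/h, and let (hₙ) be a sequence of positive bandwidths with hₙ → 0 and n·hₙ → ∞. Then the supervised kernel estimator Ŝ_SL(t) = (Σᵢ₌₁ⁿ K_{hₙ}(Lᵢ − t) · 1{Tᵢ ≥ Lᵢ}) / (Σᵢ₌₁ⁿ K_{hₙ}(Lᵢ − t)) converges in probability to S(t) as n → ∞. -/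
open MeasureTheory ProbabilityTheory Filter

lemma aux_restrict_le (f : ℝ → ℝ) {J : Set ℝ} (hJ : MeasurableSet J) {b : ℝ}
    (hb : ∀ y ∈ J, f y ≤ b) :
    (volume.withDensity (fun s => ENNReal.ofReal (f s))).restrict J ≤
      (ENNReal.ofReal b) • volume.restrict J := by
  refine Measure.le_iff.2 (fun A hA => ?_)
  rw [Measure.restrict_apply hA, withDensity_apply _ (hA.inter hJ)]
  rw [Measure.smul_apply, Measure.restrict_apply hA, smul_eq_mul]
  rw [← lintegral_indicator (hA.inter hJ)]
  calc ∫⁻ y, (A ∩ J).indicator (fun s => ENNReal.ofReal (f s)) y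
      ≤ ∫⁻ y, (A ∩ J).indicator (fun _ => ENNReal.ofReal b) y := by
        apply lintegral_mono
        intro y
        by_cases hy : y ∈ A ∩ J
        · simp only [Set.indicator_of_mem hy]
          exact ENNReal.ofReal_le_ofReal (hb y hy.2)
        · simp [Set.indicator_of_notMem hy]
    _ = ENNReal.ofReal b * volume (A ∩ J) := by
        rw [lintegral_indicator (hA.inter hJ)]; simp

lemma aux_restrict_ge (f : ℝ → ℝ) {J : Set ℝ} (hJ : MeasurableSet J) {b : ℝ}
    (hb : ∀ y ∈ J, ENNReal.ofReal b ≤ ENNReal.ofReal (f y)) :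
    (ENNReal.ofReal b) • volume.restrict J ≤
      (volume.withDensity (fun s => ENNReal.ofReal (f s))).restrict J := by
  refine Measure.le_iff.2 (fun A hA => ?_)
  rw [Measure.restrict_apply hA, withDensity_apply _ (hA.inter hJ)]
  rw [Measure.smul_apply, Measure.restrict_apply hA, smul_eq_mul]
  rw [← lintegral_indicator (hA.inter hJ)]
  calc ENNReal.ofReal b * volume (A ∩ J)
      = ∫⁻ y, (A ∩ J).indicator (fun _ => ENNReal.ofReal b) y := by
        rw [lintegral_indicator (hA.inter hJ)]; simp
    _ ≤ ∫⁻ y, (A ∩ J).indicator (fun s => ENNReal.ofReal (f s)) y := by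
        apply lintegral_mono
        intro y
        by_cases hy : y ∈ A ∩ J
        · simp only [Set.indicator_of_mem hy]
          exact hb y hy.2
        · simp [Set.indicator_of_notMem hy]

lemma approxId (fl : ℝ → ℝ) (t : ℝ) (hflcont : ContinuousAt fl t) (hflnn : 0 ≤ fl t)
    (G : ℝ → ℝ) (hGmeas : Measurable G) (hGnn : ∀ s, 0 ≤ G s)
    (hGcont : ContinuousAt G t)
    (K : ℝ → ℝ) (hKmeas : Measurable K)
    (hKnonneg : ∀ u, 0 ≤ K u) (hKint : Integrable K) (hKone : ∫ u, K u = 1)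
    (hKsupp : HasCompactSupport K)
    (h : ℕ → ℝ) (hhpos : ∀ n, 0 < h n) (hh0 : Tendsto h atTop (nhds 0)) :
    Tendsto (fun n => ∫ y, ((h n)⁻¹ * K ((y - t) / h n)) * G y
        ∂(volume.withDensity (fun s => ENNReal.ofReal (fl s)))) atTop
      (nhds (G t * fl t)) := by
  set ν := volume.withDensity (fun s => ENNReal.ofReal (fl s)) with hν
  obtain ⟨R, hR⟩ := hKsupp.isBounded.subset_closedBall 0
  have hRpos : 0 < max R 1 := lt_of_lt_of_le one_pos (le_max_right _ _)
  have hKzero : ∀ u : ℝ, max R 1 < |u| → K u = 0 := by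
    intro u hu
    by_contra hne
    have h1 : u ∈ tsupport K := subset_tsupport K (by simpa using hne)
    have h2 := hR h1
    rw [Metric.mem_closedBall, Real.dist_eq, sub_zero] at h2
    have : |u| ≤ max R 1 := le_trans h2 (le_max_left _ _)
    linarith
  set R' := max R 1 with hR'
  set φ : ℕ → ℝ → ℝ := fun n y => (h n)⁻¹ * K ((y - t) / h n) with hφ
  have hφnn : ∀ n y, 0 ≤ φ n y := fun n y =>
    mul_nonneg (inv_nonneg.2 (hhpos n).le) (hKnonneg _)
  have hφmeas : ∀ n, Measurable (φ n) := fun n =>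
    (measurable_const.mul (hKmeas.comp ((measurable_id.sub_const t).div_const _)))
  have hφint : ∀ n, Integrable (φ n) volume := by
    intro n
    have h1 : Integrable (fun y : ℝ => K (y / h n)) volume :=
      hKint.comp_div (hhpos n).ne'
    exact (h1.comp_sub_right t).const_mul _
  have hφ1 : ∀ n, ∫ y, φ n y ∂volume = 1 := by
    intro n
    rw [hφ]
    simp only
    rw [integral_const_mul]
    have h1 : ∫ y : ℝ, K ((y - t) / h n) ∂volume = ∫ y : ℝ, K (y / h n) ∂volume :=
      integral_sub_right_eq_self (fun y => K (y / h n)) t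
    rw [h1, MeasureTheory.Measure.integral_comp_div K (h n), abs_of_pos (hhpos n), hKone,
      smul_eq_mul, mul_one, inv_mul_cancel₀ (hhpos n).ne']
  have hφlint : ∀ n, ∫⁻ y, ENNReal.ofReal (φ n y) ∂volume = 1 := by
    intro n
    rw [← ofReal_integral_eq_lintegral_ofReal (hφint n) (ae_of_all _ (hφnn n)), hφ1,
      ENNReal.ofReal_one]
  have hφ0 : ∀ n y, h n * R' < |y - t| → φ n y = 0 := by
    intro n y hy
    have : R' < |(y - t) / h n| := by
      rw [abs_div, abs_of_pos (hhpos n), lt_div_iff₀ (hhpos n)]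
      rw [mul_comm] at hy; exact hy
    simp [hφ, hKzero _ this]
  have hInn : ∀ n, 0 ≤ ∫ y, φ n y * G y ∂ν :=
    fun n => integral_nonneg (fun y => mul_nonneg (hφnn n y) (hGnn y))
  -- the integral as a lintegral
  have hIrep : ∀ n, ∫ y, φ n y * G y ∂ν =
      (∫⁻ y, ENNReal.ofReal (φ n y * G y) ∂ν).toReal := by
    intro n
    exact integral_eq_lintegral_of_nonneg_ae
      (ae_of_all _ (fun y => mul_nonneg (hφnn n y) (hGnn y)))
      ((hφmeas n).mul hGmeas).aestronglyMeasurable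
  -- a helper for lintegrals of φ times a nonneg constant
  have hlintc : ∀ n (c : ℝ), 0 ≤ c →
      ∫⁻ y, ENNReal.ofReal (φ n y * c) ∂volume = ENNReal.ofReal c := by
    intro n c hc
    have : ∀ y, ENNReal.ofReal (φ n y * c) = ENNReal.ofReal c * ENNReal.ofReal (φ n y) := by
      intro y; rw [mul_comm, ENNReal.ofReal_mul hc]
    simp_rw [this]
    rw [lintegral_const_mul _ ((hφmeas n).ennreal_ofReal), hφlint n, mul_one]
  -- the core two-sided eventual bound
  have key : ∀ ε' : ℝ, 0 < ε' →
      (∀ᶠ n in atTop, ∫ y, φ n y * G y ∂ν ≤ (G t + ε') * (fl t + ε')) ∧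
      (∀ᶠ n in atTop,
        max 0 (G t - ε') * max 0 (fl t - ε') ≤ ∫ y, φ n y * G y ∂ν) := by
    intro ε' hε'
    obtain ⟨δ1, hδ1, hGδ⟩ := Metric.continuousAt_iff.1 hGcont ε' hε'
    obtain ⟨δ2, hδ2, hfδ⟩ := Metric.continuousAt_iff.1 hflcont ε' hε'
    set δ := min δ1 δ2 with hδdef
    have hδ : 0 < δ := lt_min hδ1 hδ2
    set J : Set ℝ := Metric.ball t δ with hJdef
    have hJmeas : MeasurableSet J := measurableSet_ball
    have hGJ : ∀ y ∈ J, G y ≤ G t + ε' := by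
      intro y hy
      have h1 := hGδ (lt_of_lt_of_le (Metric.mem_ball.1 hy) (min_le_left _ _))
      rw [Real.dist_eq] at h1
      linarith [(abs_lt.1 h1).2]
    have hGJ' : ∀ y ∈ J, max 0 (G t - ε') ≤ G y := by
      intro y hy
      have h1 := hGδ (lt_of_lt_of_le (Metric.mem_ball.1 hy) (min_le_left _ _))
      rw [Real.dist_eq] at h1
      refine max_le (hGnn y) ?_
      linarith [(abs_lt.1 h1).1]
    have hfJ : ∀ y ∈ J, fl y ≤ fl t + ε' := by
      intro y hy
      have h1 := hfδ (lt_of_lt_of_le (Metric.mem_ball.1 hy) (min_le_right _ _))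
      rw [Real.dist_eq] at h1
      linarith [(abs_lt.1 h1).2]
    have hfJ' : ∀ y ∈ J, ENNReal.ofReal (max 0 (fl t - ε')) ≤ ENNReal.ofReal (fl y) := by
      intro y hy
      have h1 := hfδ (lt_of_lt_of_le (Metric.mem_ball.1 hy) (min_le_right _ _))
      rw [Real.dist_eq] at h1
      have h2 : fl t - ε' ≤ fl y := by linarith [(abs_lt.1 h1).1]
      rcases le_or_gt (fl t - ε') 0 with h0 | h0
      · rw [max_eq_left h0]; simp
      · rw [max_eq_right h0.le]; exact ENNReal.ofReal_le_ofReal h2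
    -- off J the kernel vanishes (once h n * R' < δ)
    have hout : ∀ n, h n * R' < δ → ∀ y, y ∉ J → φ n y = 0 := by
      intro n hn y hy
      apply hφ0
      have : δ ≤ |y - t| := by
        rw [hJdef, Metric.mem_ball, Real.dist_eq, not_lt] at hy
        exact hy
      linarith
    have hev : ∀ᶠ n in atTop, h n * R' < δ := by
      have h1 : Tendsto (fun n => h n * R') atTop (nhds 0) := by
        simpa using hh0.mul_const R'
      exact h1.eventually_lt_const hδ
    -- upper chain
    have hub : ∀ n, h n * R' < δ →
        (∫⁻ y, ENNReal.ofReal (φ n y * G y) ∂ν) ≤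
          ENNReal.ofReal (G t + ε') * ENNReal.ofReal (fl t + ε') := by
      intro n hn
      have hGtε : (0:ℝ) ≤ G t + ε' := by linarith [hGnn t]
      have hstep1 : (fun y => ENNReal.ofReal (φ n y * G y)) =
          J.indicator (fun y => ENNReal.ofReal (φ n y * G y)) := by
        funext y
        by_cases hy : y ∈ J
        · rw [Set.indicator_of_mem hy]
        · rw [Set.indicator_of_notMem hy, hout n hn y hy, zero_mul, ENNReal.ofReal_zero]
      calc ∫⁻ y, ENNReal.ofReal (φ n y * G y) ∂ν
          = ∫⁻ y, J.indicator (fun y => ENNReal.ofReal (φ n y * G y)) y ∂ν := by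
            rw [← hstep1]
        _ ≤ ∫⁻ y, J.indicator (fun y => ENNReal.ofReal (φ n y * (G t + ε'))) y ∂ν := by
            apply lintegral_mono
            intro y
            by_cases hy : y ∈ J
            · simp only [Set.indicator_of_mem hy]
              exact ENNReal.ofReal_le_ofReal
                (mul_le_mul_of_nonneg_left (hGJ y hy) (hφnn n y))
            · simp [Set.indicator_of_notMem hy]
        _ = ∫⁻ y, ENNReal.ofReal (φ n y * (G t + ε')) ∂(ν.restrict J) :=
            lintegral_indicator hJmeas _
        _ ≤ ∫⁻ y, ENNReal.ofReal (φ n y * (G t + ε'))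
              ∂((ENNReal.ofReal (fl t + ε')) • volume.restrict J) :=
            lintegral_mono' (aux_restrict_le fl hJmeas hfJ) le_rfl
        _ = ENNReal.ofReal (fl t + ε') *
              ∫⁻ y, ENNReal.ofReal (φ n y * (G t + ε')) ∂(volume.restrict J) :=
            lintegral_smul_measure _ _
        _ ≤ ENNReal.ofReal (fl t + ε') *
              ∫⁻ y, ENNReal.ofReal (φ n y * (G t + ε')) ∂volume := by
            exact mul_le_mul_right (lintegral_mono' Measure.restrict_le_self le_rfl) _
        _ = ENNReal.ofReal (fl t + ε') * ENNReal.ofReal (G t + ε') := by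
            rw [hlintc n _ hGtε]
        _ = ENNReal.ofReal (G t + ε') * ENNReal.ofReal (fl t + ε') := mul_comm _ _
    -- lower chain
    have hlb : ∀ n, h n * R' < δ →
        ENNReal.ofReal (max 0 (G t - ε')) * ENNReal.ofReal (max 0 (fl t - ε')) ≤
          ∫⁻ y, ENNReal.ofReal (φ n y * G y) ∂ν := by
      intro n hn
      set c1 := max 0 (G t - ε') with hc1
      have hc1nn : (0:ℝ) ≤ c1 := le_max_left _ _
      have hstep1 : (fun y => ENNReal.ofReal (φ n y * c1)) =
          J.indicator (fun y => ENNReal.ofReal (φ n y * c1)) := by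
        funext y
        by_cases hy : y ∈ J
        · rw [Set.indicator_of_mem hy]
        · rw [Set.indicator_of_notMem hy, hout n hn y hy, zero_mul, ENNReal.ofReal_zero]
      calc ENNReal.ofReal c1 * ENNReal.ofReal (max 0 (fl t - ε'))
          = ENNReal.ofReal (max 0 (fl t - ε')) *
              ∫⁻ y, ENNReal.ofReal (φ n y * c1) ∂volume := by
            rw [hlintc n _ hc1nn, mul_comm]
        _ = ENNReal.ofReal (max 0 (fl t - ε')) *
              ∫⁻ y, ENNReal.ofReal (φ n y * c1) ∂(volume.restrict J) := by
            have hres : ∫⁻ y, ENNReal.ofReal (φ n y * c1) ∂volume =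
                ∫⁻ y, ENNReal.ofReal (φ n y * c1) ∂(volume.restrict J) := by
              conv_lhs => rw [hstep1]
              exact lintegral_indicator hJmeas _
            rw [hres]
        _ = ∫⁻ y, ENNReal.ofReal (φ n y * c1)
              ∂((ENNReal.ofReal (max 0 (fl t - ε'))) • volume.restrict J) :=
            by rw [lintegral_smul_measure, smul_eq_mul]
        _ ≤ ∫⁻ y, ENNReal.ofReal (φ n y * c1) ∂(ν.restrict J) :=
            lintegral_mono' (aux_restrict_ge fl hJmeas hfJ') le_rfl
        _ = ∫⁻ y, J.indicator (fun y => ENNReal.ofReal (φ n y * c1)) y ∂ν :=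
            (lintegral_indicator hJmeas _).symm
        _ ≤ ∫⁻ y, ENNReal.ofReal (φ n y * G y) ∂ν := by
            apply lintegral_mono
            intro y
            by_cases hy : y ∈ J
            · simp only [Set.indicator_of_mem hy]
              exact ENNReal.ofReal_le_ofReal
                (mul_le_mul_of_nonneg_left (hGJ' y hy) (hφnn n y))
            · simp [Set.indicator_of_notMem hy]
    constructor
    · refine hev.mono (fun n hn => ?_)
      rw [hIrep n]
      have hGtε : (0:ℝ) ≤ G t + ε' := by linarith [hGnn t]
      have hfltε : (0:ℝ) ≤ fl t + ε' := by linarith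
      calc (∫⁻ y, ENNReal.ofReal (φ n y * G y) ∂ν).toReal
          ≤ (ENNReal.ofReal (G t + ε') * ENNReal.ofReal (fl t + ε')).toReal := by
            refine ENNReal.toReal_mono ?_ (hub n hn)
            exact ENNReal.mul_ne_top ENNReal.ofReal_ne_top ENNReal.ofReal_ne_top
        _ = (G t + ε') * (fl t + ε') := by
            rw [ENNReal.toReal_mul, ENNReal.toReal_ofReal hGtε, ENNReal.toReal_ofReal hfltε]
    · refine hev.mono (fun n hn => ?_)
      rw [hIrep n]
      have hfin : (∫⁻ y, ENNReal.ofReal (φ n y * G y) ∂ν) ≠ ⊤ :=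
        ne_top_of_le_ne_top
          (ENNReal.mul_ne_top ENNReal.ofReal_ne_top ENNReal.ofReal_ne_top) (hub n hn)
      have h1 := ENNReal.toReal_mono hfin (hlb n hn)
      rw [ENNReal.toReal_mul, ENNReal.toReal_ofReal (le_max_left _ _),
        ENNReal.toReal_ofReal (le_max_left _ _)] at h1
      exact h1
  -- conclude via order topology
  refine tendsto_order.2 ⟨fun l hl => ?_, fun u hu => ?_⟩
  · rcases lt_or_ge l 0 with hl0 | hl0
    · exact Eventually.of_forall (fun n => lt_of_lt_of_le hl0 (hInn n))
    · have hv : 0 < G t * fl t := lt_of_le_of_lt hl0 hl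
      have hGt : 0 < G t := by
        rcases lt_or_eq_of_le (hGnn t) with h1 | h1
        · exact h1
        · exfalso; rw [← h1, zero_mul] at hv; exact lt_irrefl 0 hv
      have hflt : 0 < fl t := by
        rcases lt_or_eq_of_le hflnn with h1 | h1
        · exact h1
        · exfalso; rw [← h1, mul_zero] at hv; exact lt_irrefl 0 hv
      set ε' := min (G t / 2) (min (fl t / 2) ((G t * fl t - l) / (2 * (G t + fl t)))) with hε'def
      have hsum : 0 < G t + fl t := by linarith
      have hε' : 0 < ε' := by
        refine lt_min (by positivity) (lt_min (by positivity) ?_)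
        have : 0 < G t * fl t - l := by linarith
        positivity
      obtain ⟨_, h2⟩ := key ε' hε'
      refine h2.mono (fun n hn => lt_of_lt_of_le ?_ hn)
      have e1 : ε' ≤ G t / 2 := min_le_left _ _
      have e2 : ε' ≤ fl t / 2 := le_trans (min_le_right _ _) (min_le_left _ _)
      have e3 : ε' ≤ (G t * fl t - l) / (2 * (G t + fl t)) :=
        le_trans (min_le_right _ _) (min_le_right _ _)
      have e3' : ε' * (2 * (G t + fl t)) ≤ G t * fl t - l :=
        (le_div_iff₀ (by positivity)).1 e3
      rw [max_eq_right (by linarith : (0:ℝ) ≤ G t - ε'),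
        max_eq_right (by linarith : (0:ℝ) ≤ fl t - ε')]
      nlinarith [sq_nonneg ε', hε'.le]
  · set v := G t * fl t with hvdef
    have hvnn : 0 ≤ v := mul_nonneg (hGnn t) hflnn
    set ε' := min 1 ((u - v) / (G t + fl t + 2)) with hε'def
    have hε' : 0 < ε' := by
      refine lt_min one_pos ?_
      have h1 : 0 < u - v := by linarith
      have h2 : 0 < G t + fl t + 2 := by nlinarith [hGnn t, hflnn]
      positivity
    obtain ⟨h1, _⟩ := key ε' hε'
    refine h1.mono (fun n hn => lt_of_le_of_lt hn ?_)
    have e1 : ε' ≤ 1 := min_le_left _ _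
    have e2 : ε' ≤ (u - v) / (G t + fl t + 2) := min_le_right _ _
    have hden : (0:ℝ) < G t + fl t + 2 := by nlinarith [hGnn t, hflnn]
    have e2' : ε' * (G t + fl t + 2) ≤ u - v := (le_div_iff₀ hden).1 e2
    nlinarith [hGnn t, hflnn, hε'.le]

lemma cheb_avg {Ω : Type*} [MeasurableSpace Ω] (P : Measure Ω) [IsProbabilityMeasure P]
    (Y : ℕ → Ω → ℝ) (hYmeas : ∀ i, Measurable (Y i))
    (hindep : iIndepFun Y P)
    (hident : ∀ i, IdentDistrib (Y i) (Y 0) P P)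
    (M : ℝ) (hYnn : ∀ i ω, 0 ≤ Y i ω) (hYb : ∀ i ω, Y i ω ≤ M)
    (n : ℕ) (hn : 0 < n) (δ : ℝ) (hδ : 0 < δ) :
    P {ω | δ ≤ |(n : ℝ)⁻¹ * ∑ i ∈ Finset.range n, Y i ω - ∫ ω, Y 0 ω ∂P|} ≤
      ENNReal.ofReal (M * (∫ ω, Y 0 ω ∂P) / (n * δ ^ 2)) := by
  set m := ∫ ω, Y 0 ω ∂P with hm
  have hY2 : ∀ i, MemLp (Y i) 2 P := by
    intro i
    refine (memLp_top_of_bound (hYmeas i).aestronglyMeasurable M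
      (ae_of_all _ fun ω => ?_)).mono_exponent le_top
    rw [Real.norm_eq_abs, abs_of_nonneg (hYnn i ω)]; exact hYb i ω
  have hmnn : 0 ≤ m := integral_nonneg (hYnn 0)
  have hint : ∀ i, Integrable (Y i) P := fun i => (hY2 i).integrable one_le_two
  set X := ∑ i ∈ Finset.range n, Y i with hX
  have hXapp : ∀ ω, X ω = ∑ i ∈ Finset.range n, Y i ω := fun ω => Finset.sum_apply _ _ _
  have hXm : MemLp X 2 P := memLp_finsetSum' _ (fun i _ => hY2 i)
  have hEX : ∫ ω, X ω ∂P = n * m := by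
    simp only [hXapp]
    rw [integral_finset_sum _ (fun i _ => hint i)]
    rw [Finset.sum_congr rfl (fun i _ => (hident i).integral_eq)]
    simp [hm, mul_comm]
  have hVarY0 : variance (Y 0) P ≤ M * m := by
    have h1 : variance (Y 0) P = ∫ ω, (Y 0 ω) ^ 2 ∂P - m ^ 2 := by
      have := variance_eq_sub (hY2 0)
      simpa [hm] using this
    have h2 : ∫ ω, (Y 0 ω) ^ 2 ∂P ≤ M * m := by
      rw [hm, ← integral_const_mul]
      refine integral_mono ((hY2 0).integrable_sq) ((hint 0).const_mul M) (fun ω => ?_)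
      have := hYb 0 ω
      have h0 := hYnn 0 ω
      nlinarith
    nlinarith [sq_nonneg m]
  have hVarX : variance X P ≤ n * (M * m) := by
    rw [hX]
    rw [IndepFun.variance_sum (fun i _ => hY2 i)
      (fun i _ j _ hij => hindep.indepFun hij)]
    calc ∑ i ∈ Finset.range n, variance (Y i) P
        = ∑ i ∈ Finset.range n, variance (Y 0) P :=
          Finset.sum_congr rfl (fun i _ => (hident i).variance_eq)
      _ = n * variance (Y 0) P := by simp [mul_comm]
      _ ≤ n * (M * m) := by
          exact mul_le_mul_of_nonneg_left hVarY0 (Nat.cast_nonneg n)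
  have hnpos : (0 : ℝ) < n := Nat.cast_pos.2 hn
  have hc : (0 : ℝ) < n * δ := mul_pos hnpos hδ
  have hcheb := meas_ge_le_variance_div_sq (μ := P) hXm hc
  have hsets : {ω | δ ≤ |(n : ℝ)⁻¹ * ∑ i ∈ Finset.range n, Y i ω - m|} =
      {ω | (n : ℝ) * δ ≤ |X ω - ∫ ω, X ω ∂P|} := by
    ext ω
    have hEX' : ∫ ω, ∑ i ∈ Finset.range n, Y i ω ∂P = n * m := by
      rw [← hEX]; exact integral_congr_ae (ae_of_all _ fun ω => (hXapp ω).symm)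
    simp only [Set.mem_setOf_eq, hXapp, hEX']
    have : (n : ℝ)⁻¹ * ∑ i ∈ Finset.range n, Y i ω - m =
        (n : ℝ)⁻¹ * ((∑ i ∈ Finset.range n, Y i ω) - n * m) := by
      field_simp
    rw [this, abs_mul, abs_of_pos (inv_pos.2 hnpos)]
    rw [le_inv_mul_iff₀ hnpos]
  rw [hsets]
  refine le_trans hcheb (ENNReal.ofReal_le_ofReal ?_)
  rw [div_le_div_iff₀ (by positivity) (by positivity)]
  calc variance X P * (n * δ ^ 2) ≤ (n * (M * m)) * (n * δ ^ 2) := by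
        refine mul_le_mul_of_nonneg_right hVarX (by positivity)
    _ = M * m * (n * δ) ^ 2 := by ring

lemma mean_eq {Ω : Type*} [MeasurableSpace Ω] (P : Measure Ω) [IsProbabilityMeasure P]
    (T0 L0 : Ω → ℝ) (hT : Measurable T0) (hL : Measurable L0) (hindep : IndepFun T0 L0 P)
    (φ : ℝ → ℝ) (hφmeas : Measurable φ) (Cφ : ℝ) (hφb : ∀ y, |φ y| ≤ Cφ)
    (S : ℝ → ℝ) (hS : ∀ s, S s = (P {ω | T0 ω ≥ s}).toReal) :
    ∫ ω, φ (L0 ω) * (if L0 ω ≤ T0 ω then (1:ℝ) else 0) ∂P =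
      ∫ y, φ y * S y ∂(Measure.map L0 P) := by
  have hpair : Measurable (fun ω => (T0 ω, L0 ω)) := hT.prodMk hL
  set g : ℝ × ℝ → ℝ := fun p => φ p.2 * (if p.2 ≤ p.1 then (1:ℝ) else 0) with hg
  have hgmeas : Measurable g := by
    refine (hφmeas.comp measurable_snd).mul ?_
    exact Measurable.ite (measurableSet_le measurable_snd measurable_fst)
      measurable_const measurable_const
  have h1 : ∫ ω, φ (L0 ω) * (if L0 ω ≤ T0 ω then (1:ℝ) else 0) ∂P =
      ∫ p, g p ∂(Measure.map (fun ω => (T0 ω, L0 ω)) P) :=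
    (integral_map hpair.aemeasurable hgmeas.aestronglyMeasurable).symm
  have h2 : Measure.map (fun ω => (T0 ω, L0 ω)) P =
      (Measure.map T0 P).prod (Measure.map L0 P) :=
    (indepFun_iff_map_prod_eq_prod_map_map hT.aemeasurable hL.aemeasurable).1 hindep
  have hprob1 : IsProbabilityMeasure (Measure.map T0 P) := Measure.isProbabilityMeasure_map hT.aemeasurable
  have hprob2 : IsProbabilityMeasure (Measure.map L0 P) := Measure.isProbabilityMeasure_map hL.aemeasurable
  have hgint : Integrable g ((Measure.map T0 P).prod (Measure.map L0 P)) := by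
    refine (integrable_const Cφ).mono' hgmeas.aestronglyMeasurable (ae_of_all _ fun p => ?_)
    rw [Real.norm_eq_abs, hg]
    simp only
    rw [abs_mul]
    rcases ite_eq_or_eq (p.2 ≤ p.1) (1:ℝ) 0 with he | he <;> rw [he]
    · simpa using hφb p.2
    · simpa using le_trans (abs_nonneg _) (hφb p.2)
  rw [h1, h2, integral_prod_symm g hgint]
  congr 1
  funext y
  have : ∀ x : ℝ, g (x, y) = φ y * (Set.indicator (Set.Ici y) (fun _ => (1:ℝ)) x) := by
    intro x
    simp [hg, Set.indicator_apply, Set.mem_Ici]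
  simp_rw [this]
  rw [integral_const_mul, integral_indicator_const (1:ℝ) measurableSet_Ici]
  rw [measureReal_def, Measure.map_apply hT measurableSet_Ici]
  have : T0 ⁻¹' Set.Ici y = {ω | T0 ω ≥ y} := by
    ext ω; simp [Set.mem_Ici, ge_iff_le]
  rw [this, smul_eq_mul, mul_one, ← hS y]

/-- Consistency of the supervised kernel estimator based on the left
censoring label. For i.i.d. copies `(Tᵢ, Lᵢ)` of independent `(T, L)`, with `L` having a
density `f_l` continuous and positive at `t`, the survival function `S` continuous at `t`,
a bounded nonnegative compactly supported probability density kernel `K`, and bandwidths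
`hₙ → 0` with `n hₙ → ∞`, the estimator
`Ŝ_SL(t) = (Σᵢ K_{hₙ}(Lᵢ − t) 1{Tᵢ ≥ Lᵢ}) / (Σᵢ K_{hₙ}(Lᵢ − t))` converges in
probability to `S(t) = P(T ≥ t)`. -/
theorem stmt_17 {Ω : Type*} [MeasurableSpace Ω] (P : Measure Ω) [IsProbabilityMeasure P]
    (T L : ℕ → Ω → ℝ)
    (hmeas : ∀ i, Measurable (fun ω => (T i ω, L i ω)))
    (hiid : iIndepFun (fun i ω => (T i ω, L i ω)) P)
    (hident : ∀ i, IdentDistrib (fun ω => (T i ω, L i ω)) (fun ω => (T 0 ω, L 0 ω)) P P)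
    (hTLindep : ∀ i, IndepFun (T i) (L i) P)
    (fl : ℝ → ℝ)
    (hdens : Measure.map (L 0) P = volume.withDensity (fun s => ENNReal.ofReal (fl s)))
    (t : ℝ) (hflcont : ContinuousAt fl t) (hflpos : 0 < fl t)
    (S : ℝ → ℝ) (hS : ∀ s, S s = (P {ω | T 0 ω ≥ s}).toReal) (hScont : ContinuousAt S t)
    (K : ℝ → ℝ) (hKmeas : Measurable K) (CK : ℝ) (hKbdd : ∀ u, |K u| ≤ CK)
    (hKnonneg : ∀ u, 0 ≤ K u) (hKint : Integrable K) (hKone : ∫ u, K u = 1)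
    (hKsupp : HasCompactSupport K)
    (h : ℕ → ℝ) (hhpos : ∀ n, 0 < h n)
    (hh0 : Tendsto h atTop (nhds 0))
    (hnh : Tendsto (fun n : ℕ => (n : ℝ) * h n) atTop atTop) :
    ∀ ε : ℝ, 0 < ε →
      Tendsto (fun n : ℕ => P {ω | ε ≤
          |(∑ i ∈ Finset.range n, ((h n)⁻¹ * K ((L i ω - t) / h n)) *
              (if T i ω ≥ L i ω then (1 : ℝ) else 0)) /
            (∑ i ∈ Finset.range n, ((h n)⁻¹ * K ((L i ω - t) / h n))) - S t|})
        atTop (nhds 0) := by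
  -- basic measurability
  have hT0 : ∀ i, Measurable (T i) := fun i => (measurable_fst.comp (hmeas i))
  have hL0 : ∀ i, Measurable (L i) := fun i => (measurable_snd.comp (hmeas i))
  have hCK : 0 ≤ CK := le_trans (abs_nonneg _) (hKbdd 0)
  have hKle : ∀ u, K u ≤ CK := fun u => le_trans (le_abs_self _) (hKbdd u)
  -- S properties
  have hSnn : ∀ s, 0 ≤ S s := fun s => (hS s) ▸ ENNReal.toReal_nonneg
  have hSle1 : ∀ s, S s ≤ 1 := by
    intro s
    rw [hS s]
    exact ENNReal.toReal_le_of_le_ofReal one_pos.le (by simpa using prob_le_one)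
  have hSanti : Antitone S := by
    intro s s' hss'
    rw [hS s, hS s']
    refine ENNReal.toReal_mono (measure_ne_top _ _) (measure_mono ?_)
    intro ω hω
    exact le_trans hss' hω
  have hSmeas : Measurable S := hSanti.measurable
  -- the kernel weights
  set φ : ℕ → ℝ → ℝ := fun n y => (h n)⁻¹ * K ((y - t) / h n) with hφ
  have hφnn : ∀ n y, 0 ≤ φ n y := fun n y =>
    mul_nonneg (inv_nonneg.2 (hhpos n).le) (hKnonneg _)
  have hφmeas : ∀ n, Measurable (φ n) := fun n =>
    (measurable_const.mul (hKmeas.comp ((measurable_id.sub_const t).div_const _)))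
  have hφb : ∀ n y, φ n y ≤ CK / h n := by
    intro n y
    rw [div_eq_inv_mul]
    exact mul_le_mul_of_nonneg_left (hKle _) (inv_nonneg.2 (hhpos n).le)
  have hφabs : ∀ n y, |φ n y| ≤ CK / h n := by
    intro n y
    rw [abs_of_nonneg (hφnn n y)]; exact hφb n y
  -- the two families of summands
  set gN : ℕ → ℝ × ℝ → ℝ := fun n p => φ n p.2 * (if p.2 ≤ p.1 then (1:ℝ) else 0) with hgN
  set gD : ℕ → ℝ × ℝ → ℝ := fun n p => φ n p.2 with hgD
  have hgNmeas : ∀ n, Measurable (gN n) := by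
    intro n
    refine ((hφmeas n).comp measurable_snd).mul ?_
    exact Measurable.ite (measurableSet_le measurable_snd measurable_fst)
      measurable_const measurable_const
  have hgDmeas : ∀ n, Measurable (gD n) := fun n => (hφmeas n).comp measurable_snd
  have hgNnn : ∀ n p, 0 ≤ gN n p := by
    intro n p
    refine mul_nonneg (hφnn n _) ?_
    split <;> norm_num
  have hgDnn : ∀ n p, 0 ≤ gD n p := fun n p => hφnn n _
  have hgNb : ∀ n p, gN n p ≤ CK / h n := by
    intro n p
    calc gN n p ≤ φ n p.2 * 1 := by
          refine mul_le_mul_of_nonneg_left ?_ (hφnn n _)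
          split <;> norm_num
      _ ≤ CK / h n := by rw [mul_one]; exact hφb n _
  have hgDb : ∀ n p, gD n p ≤ CK / h n := fun n p => hφb n _
  -- the means
  set Nn : ℕ → ℝ := fun n => ∫ ω, gN n (T 0 ω, L 0 ω) ∂P with hNn
  set Dn : ℕ → ℝ := fun n => ∫ ω, gD n (T 0 ω, L 0 ω) ∂P with hDn
  have hNneq : ∀ n, Nn n = ∫ y, φ n y * S y ∂(Measure.map (L 0) P) := by
    intro n
    exact mean_eq P (T 0) (L 0) (hT0 0) (hL0 0) (hTLindep 0) (φ n) (hφmeas n)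
      (CK / h n) (hφabs n) S hS
  have hDneq : ∀ n, Dn n = ∫ y, φ n y * (1:ℝ) ∂(Measure.map (L 0) P) := by
    intro n
    simp only [hDn, hgD, mul_one]
    exact (integral_map (hL0 0).aemeasurable (hφmeas n).aestronglyMeasurable).symm
  -- limits of the means
  have hNlim : Tendsto Nn atTop (nhds (S t * fl t)) := by
    have := approxId fl t hflcont hflpos.le S hSmeas hSnn hScont K hKmeas hKnonneg
      hKint hKone hKsupp h hhpos hh0
    simp only [← hdens] at this
    exact this.congr (fun n => (hNneq n).symm)
  have hDlim : Tendsto Dn atTop (nhds (fl t)) := by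
    have := approxId fl t hflcont hflpos.le (fun _ => (1:ℝ)) measurable_const
      (fun _ => one_pos.le) continuousAt_const K hKmeas hKnonneg hKint hKone hKsupp h hhpos hh0
    simp only [← hdens, one_mul] at this
    exact this.congr (fun n => (hDneq n).symm)
  -- averages
  set A : ℕ → Ω → ℝ := fun n ω => (n : ℝ)⁻¹ * ∑ i ∈ Finset.range n, gN n (T i ω, L i ω) with hA
  set B : ℕ → Ω → ℝ := fun n ω => (n : ℝ)⁻¹ * ∑ i ∈ Finset.range n, gD n (T i ω, L i ω) with hB
  -- convergence in probability of the averages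
  have claim : ∀ (g : ℕ → ℝ × ℝ → ℝ), (∀ n, Measurable (g n)) → (∀ n p, 0 ≤ g n p) →
      (∀ n p, g n p ≤ CK / h n) → ∀ (c : ℝ),
      Tendsto (fun n => ∫ ω, g n (T 0 ω, L 0 ω) ∂P) atTop (nhds c) →
      ∀ δ : ℝ, 0 < δ →
      Tendsto (fun n : ℕ => P {ω | δ ≤
          |(n : ℝ)⁻¹ * ∑ i ∈ Finset.range n, g n (T i ω, L i ω) - c|}) atTop (nhds 0) := by
    intro g hgmeas hgnn hgb c hmean δ hδ
    set m : ℕ → ℝ := fun n => ∫ ω, g n (T 0 ω, L 0 ω) ∂P with hm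
    have hmnn : ∀ n, 0 ≤ m n := fun n => integral_nonneg (fun ω => hgnn n _)
    -- the Chebyshev bound applies for n ≥ 1
    have hcheb : ∀ n : ℕ, 0 < n →
        P {ω | δ / 2 ≤ |(n : ℝ)⁻¹ * ∑ i ∈ Finset.range n, g n (T i ω, L i ω) - m n|} ≤
          ENNReal.ofReal ((CK / h n) * m n / (n * (δ / 2) ^ 2)) := by
      intro n hn
      have := cheb_avg P (fun i ω => g n (T i ω, L i ω))
        (fun i => (hgmeas n).comp (hmeas i))
        (hiid.comp (fun _ => g n) (fun _ => hgmeas n))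
        (fun i => (hident i).comp (hgmeas n))
        (CK / h n) (fun i ω => hgnn n _) (fun i ω => hgb n _)
        n hn (δ / 2) (by linarith)
      exact this
    -- the real bound tends to zero
    have hbound : Tendsto (fun n : ℕ => (CK / h n) * m n / ((n : ℝ) * (δ / 2) ^ 2)) atTop
        (nhds 0) := by
      have h1 : Tendsto (fun n : ℕ => ((n : ℝ) * h n)⁻¹) atTop (nhds 0) :=
        tendsto_inv_atTop_zero.comp hnh
      have h2 : Tendsto (fun n : ℕ => CK * m n / ((δ / 2) ^ 2) * ((n : ℝ) * h n)⁻¹) atTop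
          (nhds (CK * c / ((δ / 2) ^ 2) * 0)) :=
        Tendsto.mul ((hmean.const_mul CK).div_const _) h1
      rw [mul_zero] at h2
      refine h2.congr' ?_
      filter_upwards [eventually_gt_atTop 0] with n hn
      have hn' : ((n : ℝ)) ≠ 0 := Nat.cast_ne_zero.2 hn.ne'
      have hh' : h n ≠ 0 := (hhpos n).ne'
      have hδ' : (δ / 2) ≠ 0 := by positivity
      field_simp
    -- squeeze
    have hev1 : ∀ᶠ n in atTop, |m n - c| < δ / 2 := by
      have := Metric.tendsto_nhds.1 hmean (δ / 2) (by linarith)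
      simpa [Real.dist_eq] using this
    refine tendsto_of_tendsto_of_tendsto_of_le_of_le' tendsto_const_nhds
      (ENNReal.ofReal_zero ▸ ENNReal.tendsto_ofReal hbound)
      (Eventually.of_forall fun n => zero_le) ?_
    filter_upwards [hev1, eventually_gt_atTop 0] with n h1 h2
    calc P {ω | δ ≤ |(n : ℝ)⁻¹ * ∑ i ∈ Finset.range n, g n (T i ω, L i ω) - c|}
        ≤ P {ω | δ / 2 ≤ |(n : ℝ)⁻¹ * ∑ i ∈ Finset.range n, g n (T i ω, L i ω) - m n|} := by
          refine measure_mono (fun ω hω => ?_)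
          simp only [Set.mem_setOf_eq] at hω ⊢
          have habs : |(n : ℝ)⁻¹ * ∑ i ∈ Finset.range n, g n (T i ω, L i ω) - c| ≤
              |(n : ℝ)⁻¹ * ∑ i ∈ Finset.range n, g n (T i ω, L i ω) - m n| + |m n - c| := by
            have := abs_sub_le ((n : ℝ)⁻¹ * ∑ i ∈ Finset.range n, g n (T i ω, L i ω)) (m n) c
            linarith
          linarith
      _ ≤ ENNReal.ofReal ((CK / h n) * m n / ((n : ℝ) * (δ / 2) ^ 2)) := hcheb n h2
  -- instantiate for numerator and denominator
  have claimA : ∀ δ : ℝ, 0 < δ →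
      Tendsto (fun n : ℕ => P {ω | δ ≤ |A n ω - S t * fl t|}) atTop (nhds 0) :=
    fun δ hδ => claim gN hgNmeas hgNnn hgNb (S t * fl t) hNlim δ hδ
  have claimB : ∀ δ : ℝ, 0 < δ →
      Tendsto (fun n : ℕ => P {ω | δ ≤ |B n ω - fl t|}) atTop (nhds 0) :=
    fun δ hδ => claim gD hgDmeas hgDnn hgDb (fl t) hDlim δ hδ
  -- final ratio argument
  intro ε hε
  set b := fl t with hb
  set a := S t * fl t with ha
  have hbpos : 0 < b := hflpos
  set η := min (b / 2) (ε * b / (4 * (1 + |S t|))) with hηdef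
  have hden : (0:ℝ) < 1 + |S t| := by positivity
  have hη : 0 < η := lt_min (by positivity) (by positivity)
  have hsub : ∀ n : ℕ, 0 < n →
      {ω | ε ≤ |(∑ i ∈ Finset.range n, ((h n)⁻¹ * K ((L i ω - t) / h n)) *
            (if T i ω ≥ L i ω then (1 : ℝ) else 0)) /
          (∑ i ∈ Finset.range n, ((h n)⁻¹ * K ((L i ω - t) / h n))) - S t|} ⊆
        {ω | η ≤ |A n ω - a|} ∪ {ω | η ≤ |B n ω - b|} := by
    intro n hn ω hω
    simp only [Set.mem_setOf_eq] at hω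
    by_contra hc
    simp only [Set.mem_union, Set.mem_setOf_eq, not_or, not_le] at hc
    obtain ⟨hc1, hc2⟩ := hc
    -- identify the ratio with A / B
    have hn' : ((n : ℝ))⁻¹ ≠ 0 := inv_ne_zero (Nat.cast_ne_zero.2 hn.ne')
    have hratio : (∑ i ∈ Finset.range n, ((h n)⁻¹ * K ((L i ω - t) / h n)) *
            (if T i ω ≥ L i ω then (1 : ℝ) else 0)) /
          (∑ i ∈ Finset.range n, ((h n)⁻¹ * K ((L i ω - t) / h n))) =
        A n ω / B n ω := by
      rw [hA, hB]
      simp only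
      rw [mul_div_mul_left _ _ hn']
    rw [hratio] at hω
    -- B is bounded below
    have hη1 : η ≤ b / 2 := min_le_left _ _
    have hη2 : η ≤ ε * b / (4 * (1 + |S t|)) := min_le_right _ _
    have hB2 : b / 2 ≤ B n ω := by
      have := (abs_lt.1 hc2).1
      linarith
    have hBpos : 0 < B n ω := by linarith
    -- the distance estimate
    have hident2 : A n ω / B n ω - S t = (A n ω - S t * B n ω) / B n ω := by
      field_simp
    have hnum : |A n ω - S t * B n ω| < η * (1 + |S t|) := by
      have heq : A n ω - S t * B n ω = (A n ω - a) + S t * (b - B n ω) := by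
        rw [ha, hb]; ring
      rw [heq]
      calc |(A n ω - a) + S t * (b - B n ω)| ≤ |A n ω - a| + |S t| * |b - B n ω| := by
            refine le_trans (abs_add_le _ _) ?_
            rw [abs_mul]
      _ < η + |S t| * η := by
            have h3 : |b - B n ω| = |B n ω - b| := abs_sub_comm _ _
            have h4 : |S t| * |b - B n ω| ≤ |S t| * η := by
              rw [h3]
              exact mul_le_mul_of_nonneg_left hc2.le (abs_nonneg _)
            rcases lt_or_eq_of_le h4 with h5 | h5
            · linarith
            · linarith
      _ = η * (1 + |S t|) := by ring
    have hfinal : |A n ω / B n ω - S t| < ε := by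
      rw [hident2, abs_div, abs_of_pos hBpos]
      rw [div_lt_iff₀ hBpos]
      have hη2' : η * (4 * (1 + |S t|)) ≤ ε * b := by
        rw [hηdef]
        have := min_le_right (b / 2) (ε * b / (4 * (1 + |S t|)))
        calc min (b / 2) (ε * b / (4 * (1 + |S t|))) * (4 * (1 + |S t|))
            ≤ (ε * b / (4 * (1 + |S t|))) * (4 * (1 + |S t|)) := by
              exact mul_le_mul_of_nonneg_right this (by positivity)
          _ = ε * b := by field_simp
      nlinarith [abs_nonneg (S t), hη.le]
    linarith
  have hAB : Tendsto (fun n : ℕ => P {ω | η ≤ |A n ω - a|} + P {ω | η ≤ |B n ω - b|})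
      atTop (nhds 0) := by
    have := (claimA η hη).add (claimB η hη)
    simpa using this
  refine tendsto_of_tendsto_of_tendsto_of_le_of_le' tendsto_const_nhds hAB
    (Eventually.of_forall fun n => zero_le) ?_
  filter_upwards [eventually_gt_atTop 0] with n hn
  exact le_trans (measure_mono (hsub n hn)) (measure_union_le _ _)
end
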